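/- Let s, γ ∈ ℂ be nonzero. The 4×4 matrix R₁ with rows (s^{-1},0,0,0), (0,γ,0,0), (0, s^{-1}−s, γ^{-1}, 0), (0,0,0,s^{-1}) satisfies the constant Yang–Baxter equation R₁₂R₁₃R₂₃ = R₂₃R₁₃R₁₂ on ℂ²⊗ℂ²⊗ℂ², where R_{ij} acts as R on the i-th and j-th tensor factors and as the identity on the remaining factor. -/
import Mathlib


/-- Embed a matrix on `ℂ²⊗ℂ²` into factors 1,2 of `ℂ²⊗ℂ²⊗ℂ²`. -/
noncomputable def lift12 (R : Matrix (Fin 2 × Fin 2) (Fin 2 × Fin 2) ℂ) :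
    Matrix (Fin 2 × Fin 2 × Fin 2) (Fin 2 × Fin 2 × Fin 2) ℂ :=
  fun p q => R (p.1, p.2.1) (q.1, q.2.1) * (if p.2.2 = q.2.2 then 1 else 0)

/-- Embed a matrix on `ℂ²⊗ℂ²` into factors 1,3 of `ℂ²⊗ℂ²⊗ℂ²`. -/
noncomputable def lift13 (R : Matrix (Fin 2 × Fin 2) (Fin 2 × Fin 2) ℂ) :
    Matrix (Fin 2 × Fin 2 × Fin 2) (Fin 2 × Fin 2 × Fin 2) ℂ :=
  fun p q => R (p.1, p.2.2) (q.1, q.2.2) * (if p.2.1 = q.2.1 then 1 else 0)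

/-- Embed a matrix on `ℂ²⊗ℂ²` into factors 2,3 of `ℂ²⊗ℂ²⊗ℂ²`. -/
noncomputable def lift23 (R : Matrix (Fin 2 × Fin 2) (Fin 2 × Fin 2) ℂ) :
    Matrix (Fin 2 × Fin 2 × Fin 2) (Fin 2 × Fin 2 × Fin 2) ℂ :=
  fun p q => R (p.2.1, p.2.2) (q.2.1, q.2.2) * (if p.1 = q.1 then 1 else 0)

/-- The standard (type a) solution `R₁` with rows
`(s⁻¹,0,0,0), (0,γ,0,0), (0,s⁻¹-s,γ⁻¹,0), (0,0,0,s⁻¹)`. -/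
noncomputable def R1 (s γ : ℂ) : Matrix (Fin 2 × Fin 2) (Fin 2 × Fin 2) ℂ :=
  fun p q =>
    if p = q then
      (if p = ((0 : Fin 2), (0 : Fin 2)) then s⁻¹
       else if p = ((0 : Fin 2), (1 : Fin 2)) then γ
       else if p = ((1 : Fin 2), (0 : Fin 2)) then γ⁻¹
       else s⁻¹)
    else if p = ((1 : Fin 2), (0 : Fin 2)) ∧ q = ((0 : Fin 2), (1 : Fin 2)) then s⁻¹ - s
    else 0

set_option maxHeartbeats 4000000 in
theorem R1_yang_baxter (s γ : ℂ) (hs : s ≠ 0) (hγ : γ ≠ 0) :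
    lift12 (R1 s γ) * lift13 (R1 s γ) * lift23 (R1 s γ)
      = lift23 (R1 s γ) * lift13 (R1 s γ) * lift12 (R1 s γ) := by
  ext ⟨a, b, c⟩ ⟨d, e, f⟩
  fin_cases a <;> fin_cases b <;> fin_cases c <;> fin_cases d <;> fin_cases e <;> fin_cases f <;>
  · simp only [Matrix.mul_apply, lift12, lift13, lift23, R1, Fintype.sum_prod_type,
      Fin.sum_univ_two]
    norm_num [Prod.ext_iff]
    try field_simp
    try ring
    try tauto
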